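/- arXiv:1905.04570 — 2 statements merged into one kernel-verified Lean document; each statement's English description precedes it below -/
import Mathlib

section
/- The Weyl group W acts transitively on the set 𝓔: for any x, y ∈ 𝓔 there exists w ∈ W with w(x) = y. -/
/-- The Picard lattice `L = ℤ^10` of a rational elliptic surface,
with basis `H, E_1, …, E_9` (index `0` is `H`, index `i+1` is `E_{i+1}`). -/
abbrev L : Type := Fin 10 → ℤ

/-- The hyperplane class `H`. -/
def Hcl : L := fun j => if j = 0 then 1 else 0

/-- The exceptional classes `E_1, …, E_9` (indexed by `Fin 9`). -/
def Ecl (i : Fin 9) : L := fun j => if j = i.succ then 1 else 0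

/-- The intersection form: `⟨H,H⟩ = 1`, `⟨E_i,E_i⟩ = -1`, with `H, E_1, …, E_9`
pairwise orthogonal. -/
def form (x y : L) : ℤ := x 0 * y 0 - ∑ i : Fin 9, x i.succ * y i.succ

/-- The fiber class `F = 3H - E_1 - ⋯ - E_9 = -K_X`. -/
def Fcl : L := (3 : ℤ) • Hcl - ∑ i : Fin 9, Ecl i

/-- The set `B = {E_1 - E_2, …, E_8 - E_9, H - E_1 - E_2 - E_3}` of simple roots. -/
def simpleRoots : Set L :=
  (Set.range fun i : Fin 8 => Ecl i.castSucc - Ecl i.succ) ∪ {Hcl - Ecl 0 - Ecl 1 - Ecl 2}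

/-- The set `𝓔` of classes of `(-1)`-curves:
`x ∈ L` with `⟨x,x⟩ = -1` and `⟨x,F⟩ = 1`. -/
def negCurves : Set L := {x | form x x = -1 ∧ form x Fcl = 1}

/-- The Weyl group `W` of `X`: the subgroup of `ℤ`-linear automorphisms of `L`
generated by the reflections `s_β(D) = D + ⟨D,β⟩β` for `β ∈ B`. -/
def Weyl : Subgroup (L ≃ₗ[ℤ] L) :=
  Subgroup.closure {w | ∃ β ∈ simpleRoots, ∀ D, w D = D + form D β • β}

/-!
Every generator of `W` is the reflection in a root orthogonal to `F`, so `W` consists of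
isometries fixing `F` and preserves `𝓔`; it contains all permutations of the `E_i`, since the
transpositions `E_i ↔ E_{i+1}` are the reflections in `E_i - E_{i+1}`.

Write `x = aH + ∑ cᵢEᵢ ∈ 𝓔`, so `3a + ∑ cᵢ = 1` and `a² - ∑ cᵢ² = -1`. Then
`∑ cᵢ(cᵢ - 1) = a(a + 3)` together with Cauchy–Schwarz gives `a ≥ 0`, and `a = 0` forces
`x = E_i`. If `a > 0`, sort the `cᵢ` increasingly; `yᵢ = 3cᵢ + a` satisfies `∑ yᵢ = 3` and
`∑ yᵢ² = 6a + 9 > 9`, which is impossible when `y₁ + y₂ + y₃ ≥ 0`. Hence `a + c₁ + c₂ + c₃ < 0`,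
and the reflection in `H - E₁ - E₂ - E₃` lowers `a`. By descent every element of `𝓔` is in the
orbit of `E₁`.
-/

open Equiv Finset

def formBilin : LinearMap.BilinForm ℤ L :=
  LinearMap.mk₂ ℤ form
    (fun x y z => by simp only [form, Pi.add_apply, add_mul, sum_add_distrib]; ring)
    (fun c x y => by simp only [form, Pi.smul_apply, smul_eq_mul, mul_sum, mul_sub, mul_assoc])
    (fun x y z => by simp only [form, Pi.add_apply, mul_add, sum_add_distrib]; ring)
    (fun c x y => by
      simp only [form, Pi.smul_apply, smul_eq_mul, mul_sum, mul_sub, mul_left_comm])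

@[simp] lemma formBilin_apply (x y : L) : formBilin x y = form x y := rfl

lemma form_comm (x y : L) : form x y = form y x := by
  simp only [form, mul_comm]

lemma form_Fcl (x : L) : form x Fcl = 3 * x 0 + ∑ i : Fin 9, x i.succ := by
  have hF : ∀ j, Fcl j = if j = 0 then 3 else -1 := by decide
  simp only [form, hF, Fin.succ_ne_zero, if_true, if_false, mul_neg, mul_one, sum_neg_distrib,
    sub_neg_eq_add]
  ring

@[simp] lemma Ecl_apply_zero (i : Fin 9) : Ecl i 0 = 0 := by
  simp [Ecl, (Fin.succ_ne_zero i).symm]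

@[simp] lemma Ecl_apply_succ (i k : Fin 9) : Ecl i k.succ = if k = i then 1 else 0 := by
  simp [Ecl, Fin.succ_inj]

lemma form_Ecl (x : L) (i : Fin 9) : form x (Ecl i) = -x i.succ := by
  simp [form]

def isometryStabilizer (v : L) : Subgroup (L ≃ₗ[ℤ] L) where
  carrier := {w | (∀ x y, form (w x) (w y) = form x y) ∧ w v = v}
  mul_mem' {w w'} hw hw' := ⟨fun x y => (hw.1 _ _).trans (hw'.1 x y), by
    simp [hw'.2, hw.2]⟩
  one_mem' := ⟨fun _ _ => rfl, rfl⟩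
  inv_mem' {w} hw := ⟨fun x y => by
    simpa using (hw.1 (w⁻¹ x) (w⁻¹ y)).symm, by simpa using congrArg w.symm hw.2.symm⟩

lemma form_simpleRoot {β : L} (hβ : β ∈ simpleRoots) : form β β = -2 ∧ form β Fcl = 0 := by
  rcases hβ with ⟨i, rfl⟩ | rfl
  · revert i; decide
  · decide

lemma Weyl_le_isometryStabilizer : Weyl ≤ isometryStabilizer Fcl := by
  refine Subgroup.closure_le _ |>.2 ?_
  rintro w ⟨β, hβ, hw⟩
  obtain ⟨hββ, hβF⟩ := form_simpleRoot hβ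
  refine ⟨fun x y => ?_, ?_⟩
  · have := congrArg₂ (fun a b => formBilin a b) (hw x) (hw y)
    simp only [map_add, map_smul, LinearMap.add_apply, LinearMap.smul_apply, smul_eq_mul,
      formBilin_apply, hββ] at this
    rw [this, form_comm β y]; ring
  · rw [hw, form_comm, hβF, zero_smul, add_zero]

lemma apply_mem_negCurves_of_mem_Weyl {w : L ≃ₗ[ℤ] L} (hw : w ∈ Weyl) {x : L}
    (hx : x ∈ negCurves) : w x ∈ negCurves := by
  obtain ⟨hform, hF⟩ := Weyl_le_isometryStabilizer hw
  exact ⟨(hform x x).trans hx.1, by rw [← hF, hform]; exact hx.2⟩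

def reflection (β : L) (hβ : form β β = -2) : L ≃ₗ[ℤ] L :=
  Module.reflection (x := β) (f := -formBilin.flip β) (by simp [hβ])

lemma reflection_apply (β : L) (hβ : form β β = -2) (x : L) :
    reflection β hβ x = x + form x β • β := by
  simp [reflection, Module.reflection_apply, sub_eq_add_neg]

lemma reflection_mem_Weyl {β : L} (hβ : β ∈ simpleRoots) :
    reflection β (form_simpleRoot hβ).1 ∈ Weyl :=
  Subgroup.subset_closure ⟨β, hβ, reflection_apply β _⟩

/-- Permutation of the exceptional classes, `E_i ↦ E_{σ i}`; hence `σ⁻¹` on coordinates. -/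
def permExceptional : Perm (Fin 9) →* (L ≃ₗ[ℤ] L) where
  toFun σ := LinearEquiv.funCongrLeft ℤ ℤ (σ⁻¹.extendDomain (finSuccAboveEquiv 0))
  map_one' := by ext; simp [LinearEquiv.funCongrLeft_apply]
  map_mul' σ τ := by
    ext
    simp [LinearEquiv.funCongrLeft_apply, ← Perm.extendDomain_mul]

@[simp] lemma permExceptional_apply_zero (σ : Perm (Fin 9)) (x : L) :
    permExceptional σ x 0 = x 0 := by
  simp [permExceptional, LinearEquiv.funCongrLeft_apply,
    Perm.extendDomain_apply_not_subtype (p := (· ≠ (0 : Fin 10)))]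

@[simp] lemma permExceptional_apply_succ (σ : Perm (Fin 9)) (x : L) (k : Fin 9) :
    permExceptional σ x k.succ = x (σ⁻¹ k).succ := by
  have h := Perm.extendDomain_apply_image σ⁻¹ (finSuccAboveEquiv 0) k
  simp only [finSuccAboveEquiv_apply, Fin.succAbove_zero] at h
  simp [permExceptional, LinearEquiv.funCongrLeft_apply, h]

lemma permExceptional_Ecl (σ : Perm (Fin 9)) (i : Fin 9) :
    permExceptional σ (Ecl i) = Ecl (σ i) := by
  ext j
  cases j using Fin.cases <;> simp [Equiv.eq_symm_apply, eq_comm]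

lemma permExceptional_swap_apply (p q : Fin 9) (x : L) :
    permExceptional (swap p q) x = x + form x (Ecl p - Ecl q) • (Ecl p - Ecl q) := by
  ext j
  cases j using Fin.cases with
  | zero => simp
  | succ k =>
    have hform : form x (Ecl p - Ecl q) = x q.succ - x p.succ := by
      simpa [form_Ecl, sub_eq_add_neg, add_comm] using map_sub (formBilin x) (Ecl p) (Ecl q)
    simp only [permExceptional_apply_succ, swap_inv, hform, Pi.add_apply, Pi.smul_apply,
      Pi.sub_apply, Ecl_apply_succ, smul_eq_mul, swap_apply_def]
    split_ifs <;> subst_vars <;> ring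

lemma permExceptional_mem_Weyl (σ : Perm (Fin 9)) : permExceptional σ ∈ Weyl := by
  have h : Submonoid.closure (Set.range fun i : Fin 8 => swap i.castSucc i.succ) ≤
      (Weyl.comap permExceptional).toSubmonoid := by
    refine Submonoid.closure_le.2 ?_
    rintro _ ⟨i, rfl⟩
    exact Subgroup.subset_closure
      ⟨_, Or.inl ⟨i, rfl⟩, permExceptional_swap_apply _ _⟩
  rw [Perm.mclosure_swap_castSucc_succ] at h
  exact h (Submonoid.mem_top σ)

lemma sum_sq_le_nine_of_monotone {y : Fin 9 → ℤ} (hy : Monotone y) (hsum : ∑ i, y i = 3)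
    (h012 : 0 ≤ y 0 + y 1 + y 2) : ∑ i, y i ^ 2 ≤ 9 := by
  have hmono : y 0 ≤ y 1 ∧ y 1 ≤ y 2 ∧ y 2 ≤ y 3 ∧ y 2 ≤ y 4 ∧ y 2 ≤ y 5 ∧ y 2 ≤ y 6 ∧
      y 2 ≤ y 7 ∧ y 2 ≤ y 8 := by
    refine ⟨hy ?_, hy ?_, hy ?_, hy ?_, hy ?_, hy ?_, hy ?_, hy ?_⟩ <;> decide
  -- `6 * y 2 ≤ y 3 + ⋯ + y 8 ≤ 3` forces `y 2 = 0`, hence `y 0 ≥ -y 1 ≥ 0`.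
  have hy0 : 0 ≤ y 0 := by
    simp only [Fin.sum_univ_succ, Fin.succ_zero_eq_one, Fin.succ_one_eq_two, Fin.reduceSucc,
      univ_unique, Fin.default_eq_zero, sum_singleton] at hsum
    omega
  calc ∑ i, y i ^ 2 ≤ (∑ i, y i) ^ 2 :=
        sum_sq_le_sq_sum_of_nonneg fun i _ => hy0.trans (hy (Fin.zero_le i))
    _ = 9 := by rw [hsum]; norm_num

section Coordinates

variable {a : ℤ} {c : Fin 9 → ℤ}

lemma sum_mul_sub_one_eq (h1 : 3 * a + ∑ i, c i = 1) (h2 : a ^ 2 - ∑ i, c i ^ 2 = -1) :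
    ∑ i, c i * (c i - 1) = a * (a + 3) := by
  have : ∑ i, c i * (c i - 1) = ∑ i, c i ^ 2 - ∑ i, c i := by
    rw [← sum_sub_distrib]; congr 1; ext; ring
  rw [this]; linear_combination -h2 - h1

lemma mul_sub_one_nonneg (t : ℤ) : 0 ≤ t * (t - 1) := by
  nlinarith [Int.le_self_sq t]

lemma nonneg_of_sum_eq_of_sum_sq_eq (h1 : 3 * a + ∑ i, c i = 1)
    (h2 : a ^ 2 - ∑ i, c i ^ 2 = -1) : 0 ≤ a := by
  have hprod : 0 ≤ a * (a + 3) :=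
    sum_mul_sub_one_eq h1 h2 ▸ sum_nonneg fun i _ => mul_sub_one_nonneg (c i)
  have hcs := sq_sum_le_card_mul_sum_sq (s := univ) (f := c)
  simp only [card_univ, Fintype.card_fin, Nat.cast_ofNat] at hcs
  rw [show ∑ i, c i = 1 - 3 * a by linarith, show ∑ i, c i ^ 2 = a ^ 2 + 1 by linarith] at hcs
  have : -6 * a ≤ 8 := by nlinarith
  by_contra! ha
  obtain rfl : a = -1 := by omega
  norm_num at hprod

lemma sum_three_mul_add_sq_eq (h1 : 3 * a + ∑ i, c i = 1) (h2 : a ^ 2 - ∑ i, c i ^ 2 = -1) :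
    ∑ i, (3 * c i + a) ^ 2 = 6 * a + 9 := by
  have hterm : ∀ i, (3 * c i + a) ^ 2 = 9 * c i ^ 2 + 6 * a * c i + a ^ 2 := fun i => by ring
  simp only [hterm, sum_add_distrib, ← mul_sum, sum_const, card_univ, Fintype.card_fin,
    nsmul_eq_mul, Nat.cast_ofNat]
  linear_combination -9 * h2 + 6 * a * h1

lemma sum_three_lt_zero_of_monotone (hc : Monotone c) (h1 : 3 * a + ∑ i, c i = 1)
    (h2 : a ^ 2 - ∑ i, c i ^ 2 = -1) (ha : 0 < a) : a + (c 0 + c 1 + c 2) < 0 := by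
  by_contra! h
  have hsum : ∑ i, (3 * c i + a) = 3 := by
    simp only [sum_add_distrib, ← mul_sum, sum_const, card_univ, Fintype.card_fin]
    linear_combination 3 * h1
  have := sum_sq_le_nine_of_monotone (fun i j hij => by linarith [hc hij]) hsum (by linarith)
  rw [sum_three_mul_add_sq_eq h1 h2] at this
  linarith

end Coordinates

section NegCurves

variable {x : L}

lemma negCurves_coords (hx : x ∈ negCurves) :
    3 * x 0 + ∑ i : Fin 9, x i.succ = 1 ∧ x 0 ^ 2 - ∑ i : Fin 9, x i.succ ^ 2 = -1 := by
  refine ⟨(form_Fcl x).symm.trans hx.2, ?_⟩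
  simp only [sq]
  exact hx.1

lemma negCurves_apply_zero_nonneg (hx : x ∈ negCurves) : 0 ≤ x 0 :=
  nonneg_of_sum_eq_of_sum_sq_eq (negCurves_coords hx).1 (negCurves_coords hx).2

lemma exists_eq_Ecl_of_apply_zero_eq_zero (hx : x ∈ negCurves) (h0 : x 0 = 0) :
    ∃ i, x = Ecl i := by
  obtain ⟨h1, h2⟩ := negCurves_coords hx
  rw [h0] at h1 h2
  have hzero := (sum_eq_zero_iff_of_nonneg fun (i : Fin 9) _ => mul_sub_one_nonneg (x i.succ)).1
    (by simpa using sum_mul_sub_one_eq h1 h2)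
  have h01 (j : Fin 9) : x j.succ = 0 ∨ x j.succ = 1 := by
    rcases mul_eq_zero.1 (hzero j (mem_univ j)) with h | h
    exacts [.inl h, .inr (by linarith)]
  obtain ⟨i, -, hi⟩ := exists_ne_zero_of_sum_ne_zero (s := univ) (f := fun j : Fin 9 => x j.succ)
    (by rw [mul_zero, zero_add] at h1; rw [h1]; exact one_ne_zero)
  have hrest : ∑ j ∈ univ.erase i, x j.succ = 0 := by
    rw [← add_sum_erase _ _ (mem_univ i), (h01 i).resolve_left hi] at h1
    simpa using h1
  have hnonneg (j : Fin 9) : 0 ≤ x j.succ := by rcases h01 j with h | h <;> omega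
  have hrest' := (sum_eq_zero_iff_of_nonneg fun j _ => hnonneg j).1 hrest
  refine ⟨i, funext fun j => ?_⟩
  cases j using Fin.cases with
  | zero => simp [h0]
  | succ k =>
    rcases eq_or_ne k i with rfl | hk
    · simpa using (h01 k).resolve_left hi
    · simpa [hk] using hrest' k (mem_erase.2 ⟨hk, mem_univ k⟩)

lemma form_H_sub_E012 (x : L) :
    form x (Hcl - Ecl 0 - Ecl 1 - Ecl 2) =
      x 0 + (x (0 : Fin 9).succ + x (1 : Fin 9).succ + x (2 : Fin 9).succ) := by
  have hH : form x Hcl = x 0 := by simp [form, Hcl, Fin.succ_ne_zero]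
  simp only [← formBilin_apply, map_sub]
  simp only [formBilin_apply, hH, form_Ecl]
  ring

lemma exists_mem_Weyl_apply_zero_lt (hx : x ∈ negCurves) (hpos : 0 < x 0) :
    ∃ w ∈ Weyl, w x 0 < x 0 := by
  set σ := Tuple.sort fun i : Fin 9 => x i.succ
  set x' := permExceptional σ⁻¹ x
  have hx' : x' ∈ negCurves := apply_mem_negCurves_of_mem_Weyl (permExceptional_mem_Weyl _) hx
  have hx'0 : x' 0 = x 0 := permExceptional_apply_zero _ _
  have hx'succ (k : Fin 9) : x' k.succ = x (σ k).succ := by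
    simp only [x', permExceptional_apply_succ, inv_inv]
  have hmono : Monotone fun i : Fin 9 => x' i.succ := fun i j hij => by
    show x' i.succ ≤ x' j.succ
    rw [hx'succ, hx'succ]; exact Tuple.monotone_sort (fun i : Fin 9 => x i.succ) hij
  obtain ⟨h1, h2⟩ := negCurves_coords hx'
  have hneg := sum_three_lt_zero_of_monotone hmono h1 h2 (hx'0 ▸ hpos)
  have hβ : Hcl - Ecl 0 - Ecl 1 - Ecl 2 ∈ simpleRoots := Or.inr rfl
  refine ⟨reflection _ (form_simpleRoot hβ).1 * permExceptional σ⁻¹,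
    mul_mem (reflection_mem_Weyl hβ) (permExceptional_mem_Weyl _), ?_⟩
  have : (Hcl - Ecl 0 - Ecl 1 - Ecl 2) 0 = 1 := by decide
  rw [LinearEquiv.mul_apply, reflection_apply]
  change (x' + form x' _ • _) 0 < x 0
  rw [Pi.add_apply, Pi.smul_apply, smul_eq_mul, this, form_H_sub_E012, hx'0]
  linarith

lemma exists_mem_Weyl_apply_eq_Ecl_zero (hx : x ∈ negCurves) : ∃ w ∈ Weyl, w x = Ecl 0 := by
  induction hn : (x 0).toNat using Nat.strong_induction_on generalizing x with
  | _ n ih =>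
  rcases (negCurves_apply_zero_nonneg hx).eq_or_lt with h0 | hpos
  · obtain ⟨i, rfl⟩ := exists_eq_Ecl_of_apply_zero_eq_zero hx h0.symm
    exact ⟨permExceptional (swap i 0), permExceptional_mem_Weyl _, by simp [permExceptional_Ecl]⟩
  · obtain ⟨w, hw, hlt⟩ := exists_mem_Weyl_apply_zero_lt hx hpos
    have hwx := apply_mem_negCurves_of_mem_Weyl hw hx
    have := negCurves_apply_zero_nonneg hwx
    obtain ⟨w', hw', hw'x⟩ := ih _ (by omega) hwx rfl
    exact ⟨w' * w, mul_mem hw' hw, hw'x⟩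

end NegCurves

/-- The Weyl group acts transitively on the set `𝓔` of
`(-1)`-classes. -/
theorem weyl_transitive_on_negCurves :
    ∀ x ∈ negCurves, ∀ y ∈ negCurves, ∃ w ∈ Weyl, w x = y := by
  intro x hx y hy
  obtain ⟨u, hu, hux⟩ := exists_mem_Weyl_apply_eq_Ecl_zero hx
  obtain ⟨v, hv, hvy⟩ := exists_mem_Weyl_apply_eq_Ecl_zero hy
  refine ⟨v⁻¹ * u, mul_mem (inv_mem hv) hu, ?_⟩
  simp [hux, ← hvy]
end

section
/- If D ∈ 𝒩 satisfies ⟨D,F⟩ = 0, then D is a nonnegative real multiple of F. -/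
/-- The real Néron–Severi space `L ⊗ ℝ = ℝ^10`. -/
abbrev LR : Type := Fin 10 → ℝ

/-- The natural inclusion `L → L ⊗ ℝ`. -/
def toR (x : L) : LR := fun j => (x j : ℝ)

/-- The intersection form extended to `L ⊗ ℝ`. -/
def formR (x y : LR) : ℝ := x 0 * y 0 - ∑ i : Fin 9, x i.succ * y i.succ

/-- The nef cone `𝒩 ⊆ L ⊗ ℝ`: classes meeting `F` and every `(-1)`-curve
nonnegatively. -/
def nefCone : Set LR :=
  {D | 0 ≤ formR D (toR Fcl) ∧ ∀ x ∈ negCurves, 0 ≤ formR D (toR x)}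

/-! For `i ≠ 1` and every `n ∈ ℤ`, the class `E₁ + n(E₁ - Eᵢ) + (n² + n)F` is a `(-1)`-class.
If `D·F = 0`, then `D` meets it in `D·E₁ + n(D·E₁ - D·Eᵢ)`, which is nonnegative for all `n`
only if `D·Eᵢ = D·E₁ =: c`. The condition `D·F = 0` then fixes the `H`-coordinate, so
`D = cF`, and `c ≥ 0` because `E₁` is a `(-1)`-class. -/

lemma eq_zero_of_forall_int_add_mul_nonneg {K : Type*} [Field K] [LinearOrder K]
    [IsStrictOrderedRing K] [Archimedean K] {a b : K} (h : ∀ n : ℤ, 0 ≤ a + n * b) :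
    b = 0 := by
  by_contra hb
  obtain ⟨k, hk⟩ := exists_nat_gt (a / |b|)
  rw [div_lt_iff₀ (abs_pos.mpr hb)] at hk
  rcases lt_or_gt_of_ne hb with hneg | hpos
  · have := h k
    rw [abs_of_neg hneg] at hk
    push_cast at this
    linarith
  · have := h (-k)
    rw [abs_of_pos hpos] at hk
    push_cast at this
    linarith

lemma toR_add (x y : L) : toR (x + y) = toR x + toR y := by
  ext; simp [toR]

lemma toR_sub (x y : L) : toR (x - y) = toR x - toR y := by
  ext; simp [toR]

lemma toR_zsmul (n : ℤ) (x : L) : toR (n • x) = (n : ℝ) • toR x := by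
  ext; simp [toR]

lemma formR_comm (x y : LR) : formR x y = formR y x := by
  simp only [formR, mul_comm]

lemma formR_add_right (x y z : LR) : formR x (y + z) = formR x y + formR x z := by
  simp only [formR, Pi.add_apply, mul_add, Finset.sum_add_distrib]; ring

lemma formR_sub_right (x y z : LR) : formR x (y - z) = formR x y - formR x z := by
  simp only [formR, Pi.sub_apply, mul_sub, Finset.sum_sub_distrib]; ring

lemma formR_smul_right (x y : LR) (c : ℝ) : formR x (c • y) = c * formR x y := by
  simp only [formR, Pi.smul_apply, smul_eq_mul, mul_sub, Finset.mul_sum]; ring_nf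

lemma formR_toR_toR (x y : L) : formR (toR x) (toR y) = form x y := by
  simp [formR, form, toR]

lemma Fcl_zero : Fcl 0 = 3 := by decide

lemma Fcl_succ (i : Fin 9) : Fcl i.succ = -1 := by
  revert i; decide

lemma formR_toR_Ecl (D : LR) (i : Fin 9) : formR D (toR (Ecl i)) = -D i.succ := by
  simp [formR, toR, Ecl, Fin.succ_inj, (Fin.succ_ne_zero _).symm]

lemma formR_toR_Fcl (D : LR) : formR D (toR Fcl) = 3 * D 0 + ∑ i : Fin 9, D i.succ := by
  simp [formR, toR, Fcl_zero, Fcl_succ, mul_comm]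

lemma formR_Ecl_Ecl (i j : Fin 9) :
    formR (toR (Ecl i)) (toR (Ecl j)) = if i = j then -1 else 0 := by
  rw [formR_toR_Ecl]; split_ifs <;> simp_all [toR, Ecl, Fin.succ_inj, eq_comm]

lemma formR_Ecl_Fcl (i : Fin 9) : formR (toR (Ecl i)) (toR Fcl) = 1 := by
  rw [formR_toR_Fcl]; simp [toR, Ecl, Fin.succ_inj, (Fin.succ_ne_zero _).symm]

lemma formR_Fcl_Ecl (i : Fin 9) : formR (toR Fcl) (toR (Ecl i)) = 1 := by
  rw [formR_comm, formR_Ecl_Fcl]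

lemma formR_Fcl_Fcl : formR (toR Fcl) (toR Fcl) = 0 := by
  rw [formR_toR_Fcl]; simp [toR, Fcl_zero, Fcl_succ]; norm_num

lemma Ecl_mem_negCurves (i : Fin 9) : Ecl i ∈ negCurves := by
  constructor
  · exact_mod_cast (formR_toR_toR _ _).symm.trans ((formR_Ecl_Ecl i i).trans (if_pos rfl))
  · exact_mod_cast (formR_toR_toR _ _).symm.trans (formR_Ecl_Fcl i)

/- For `e = E₁`, `a = E₁ - E_{i+1}` one has `e² = -1`, `a² = -2`, `e·a = -1`, `a·F = 0`,
so `(e + n a + m F)² = -1 - 2n² - 2n + 2m`, which forces `m = n² + n`. -/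
def translateClass (i : Fin 9) (n : ℤ) : L := Ecl 0 + n • (Ecl 0 - Ecl i) + (n ^ 2 + n) • Fcl

lemma formR_toR_translateClass (D : LR) (i : Fin 9) (n : ℤ) :
    formR D (toR (translateClass i n)) = formR D (toR (Ecl 0)) +
      n * (formR D (toR (Ecl 0)) - formR D (toR (Ecl i))) + (n ^ 2 + n) * formR D (toR Fcl) := by
  simp only [translateClass, toR_add, toR_sub, toR_zsmul, formR_add_right, formR_sub_right,
    formR_smul_right]
  push_cast; ring

lemma translateClass_mem_negCurves {i : Fin 9} (hi : i ≠ 0) (n : ℤ) :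
    translateClass i n ∈ negCurves := by
  constructor
  · rw [← Int.cast_inj (α := ℝ), ← formR_toR_toR, formR_toR_translateClass]
    simp only [formR_comm (toR (translateClass i n)), formR_toR_translateClass, formR_Ecl_Ecl,
      formR_Ecl_Fcl, formR_Fcl_Ecl, formR_Fcl_Fcl, if_neg hi, if_neg hi.symm]
    push_cast; ring
  · rw [← Int.cast_inj (α := ℝ), ← formR_toR_toR, formR_comm, formR_toR_translateClass]
    simp only [formR_Fcl_Ecl, formR_Fcl_Fcl]
    push_cast; ring

lemma formR_Ecl_eq_of_mem_nefCone {D : LR} (hD : D ∈ nefCone) (hDF : formR D (toR Fcl) = 0)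
    (i : Fin 9) : formR D (toR (Ecl i)) = formR D (toR (Ecl 0)) := by
  rcases eq_or_ne i 0 with rfl | hi
  · rfl
  suffices h : formR D (toR (Ecl 0)) - formR D (toR (Ecl i)) = 0 from (sub_eq_zero.mp h).symm
  refine eq_zero_of_forall_int_add_mul_nonneg (a := formR D (toR (Ecl 0))) fun n => ?_
  simpa [formR_toR_translateClass, hDF] using hD.2 _ (translateClass_mem_negCurves hi n)

lemma eq_smul_Fcl_of_formR_Ecl_eq {D : LR} {c : ℝ} (hDF : formR D (toR Fcl) = 0)
    (hc : ∀ i, formR D (toR (Ecl i)) = c) : D = c • toR Fcl := by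
  simp only [formR_toR_Ecl] at hc
  have hsucc (i : Fin 9) : D i.succ = -c := by linarith [hc i]
  rw [formR_toR_Fcl] at hDF
  simp only [hsucc, Finset.sum_const, Finset.card_univ, Fintype.card_fin, nsmul_eq_mul,
    Nat.cast_ofNat] at hDF
  funext k
  refine Fin.cases ?_ (fun i => ?_) k
  · simp [toR, Fcl_zero]; linarith
  · simp [toR, Fcl_succ, hsucc]

/-- If `D` is in the nef cone `𝒩` and `⟨D,F⟩ = 0`, then `D` is
a nonnegative real multiple of the fiber class `F`. -/
theorem nef_orthogonal_to_fiber_is_multiple_of_fiber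
    (D : LR) (hD : D ∈ nefCone) (hDF : formR D (toR Fcl) = 0) :
    ∃ t : ℝ, 0 ≤ t ∧ D = t • toR Fcl :=
  ⟨formR D (toR (Ecl 0)), hD.2 _ (Ecl_mem_negCurves 0),
    eq_smul_Fcl_of_formR_Ecl_eq hDF (formR_Ecl_eq_of_mem_nefCone hD hDF)⟩
end
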